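/- In the CMBS setting, let S be a CMBS at x₀, T ⊆ S, U ⊆ {1,…,n} with U ∩ S = ∅, and v : X → ℝ^n a function continuous at x₀. If x ↦ P_T(x)v(x) is NOT continuous at x₀, then x ↦ (P_T(x) + P_U(x))v(x) is not continuous at x₀. -/

import Mathlib

open Matrix

/-- `P_S(x) = ∑_{i ∈ S} ĵ_i(x) ĵ_i(x)ᵀ`, the projector-valued function
associated with a subset `S` of the pointwise orthonormal frame `ĵ`. -/
def projSum {X : Type*} {n : ℕ} (j : Fin n → X → (Fin n → ℝ))
    (S : Finset (Fin n)) (x : X) : Matrix (Fin n) (Fin n) ℝ :=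
  ∑ i ∈ S, vecMulVec (j i x) (j i x)

/-- `S` is a continuous minimum basis subset (CMBS) at `x₀`: `S` is nonempty, `P_S` is
continuous at `x₀`, and no nonempty proper subset `T ⊊ S` has `P_T` continuous at `x₀`. -/
def IsCMBS {X : Type*} [TopologicalSpace X] {n : ℕ}
    (j : Fin n → X → (Fin n → ℝ)) (x₀ : X) (S : Finset (Fin n)) : Prop :=
  S.Nonempty ∧ ContinuousAt (projSum j S) x₀ ∧
    ∀ T : Finset (Fin n), T.Nonempty → T ⊂ S → ¬ ContinuousAt (projSum j T) x₀

/-!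
Since `P_S P_T = P_{S ∩ T}` for an orthonormal frame, `T ⊆ S` and `U ∩ S = ∅` give
`P_S (P_T + P_U) = P_T`. So `P_T v = P_S ((P_T + P_U) v)`, and the right-hand side would be
continuous at `x₀` if `(P_T + P_U) v` were, because `P_S` is.
-/

theorem ContinuousAt.matrix_mulVec {X R m n : Type*} [TopologicalSpace X] [TopologicalSpace R]
    [NonUnitalNonAssocSemiring R] [ContinuousAdd R] [ContinuousMul R] [Fintype n]
    {A : X → Matrix m n R} {w : X → n → R} {x₀ : X}
    (hA : ContinuousAt A x₀) (hw : ContinuousAt w x₀) :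
    ContinuousAt (fun x => A x *ᵥ w x) x₀ :=
  (continuous_fst.matrix_mulVec continuous_snd).continuousAt.comp
    (f := fun x => (A x, w x)) (hA.prodMk hw)

theorem projSum_mul_projSum {X : Type*} {n : ℕ} {j : Fin n → X → (Fin n → ℝ)} {x : X}
    (horth : ∀ i k : Fin n, j i x ⬝ᵥ j k x = if i = k then 1 else 0)
    (S T : Finset (Fin n)) :
    projSum j S x * projSum j T x = projSum j (S ∩ T) x := by
  simp only [projSum, Finset.sum_mul_sum, vecMulVec_mul_vecMulVec, horth, ite_smul,
    one_smul, zero_smul]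
  rw [← Finset.sum_ite_mem]
  refine Finset.sum_congr rfl fun i _ => ?_
  simp_rw [apply_ite (vecMulVec (j i x)), vecMulVec_zero]
  exact Finset.sum_ite_eq T i fun k => vecMulVec (j i x) (j k x)

theorem cmbs_not_continuousAt_add_general
    {X : Type*} [NormedAddCommGroup X]
    {n : ℕ} (j : Fin n → X → (Fin n → ℝ)) (x₀ : X)
    (horth : ∀ x, ∀ i k : Fin n, j i x ⬝ᵥ j k x = if i = k then 1 else 0)
    (S : Finset (Fin n)) (hS : IsCMBS j x₀ S)
    (T : Finset (Fin n)) (hTS : T ⊆ S)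
    (U : Finset (Fin n)) (hUS : U ∩ S = ∅)
    (v : X → (Fin n → ℝ))
    (hnot : ¬ ContinuousAt (fun x => (projSum j T x).mulVec (v x)) x₀) :
    ¬ ContinuousAt (fun x => (projSum j T x + projSum j U x).mulVec (v x)) x₀ := by
  intro hcont
  have hproj : ∀ x, projSum j S x * (projSum j T x + projSum j U x) = projSum j T x := by
    intro x
    rw [mul_add, projSum_mul_projSum (horth x), projSum_mul_projSum (horth x),
      Finset.inter_eq_right.mpr hTS, Finset.inter_comm, hUS]
    simp [projSum]
  refine hnot ((hS.2.1.matrix_mulVec hcont).congr (.of_forall fun x => ?_))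
  simp only [mulVec_mulVec, hproj]

/-- If `S` is a CMBS at `x₀`, `T ⊆ S`, `U` is disjoint from `S`, `v` is continuous at
`x₀`, and `P_T v` is not continuous at `x₀`, then `(P_T + P_U) v` is not continuous
at `x₀`. -/
theorem cmbs_not_continuousAt_add
    {X : Type*} [NormedAddCommGroup X] [NormedSpace ℝ X]
    {n : ℕ} (j : Fin n → X → (Fin n → ℝ)) (x₀ : X)
    (horth : ∀ x, ∀ i k : Fin n, j i x ⬝ᵥ j k x = if i = k then 1 else 0)
    (S : Finset (Fin n)) (hS : IsCMBS j x₀ S)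
    (T : Finset (Fin n)) (hTS : T ⊆ S)
    (U : Finset (Fin n)) (hUS : U ∩ S = ∅)
    (v : X → (Fin n → ℝ)) (hv : ContinuousAt v x₀)
    (hnot : ¬ ContinuousAt (fun x => (projSum j T x).mulVec (v x)) x₀) :
    ¬ ContinuousAt (fun x => (projSum j T x + projSum j U x).mulVec (v x)) x₀ :=
  cmbs_not_continuousAt_add_general j x₀ horth S hS T hTS U hUS v hnot
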